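/- Fix c ∈ K. Let D̃_t be the total derivative of the new 2-component equation (ceqnew): 𝔽̃¹ = ũ¹₀·ũ²₀/ũ²₁, 𝔽̃² = ũ²₀·(c·ũ¹₋₁ − ũ¹₀)/ũ¹₋₁. Set Φ¹ = −ũ²₁/ũ¹₀ and Φ² = (c·ũ¹₀·ũ²₁ − ũ¹₀·ũ²₀ − ũ¹₁·ũ²₁)/(ũ¹₀·ũ²₁). Then Φ = (Φ¹, Φ²) is a Miura-type transformation from equation (ceqnew) to the Mansfield–Marí Beffa–Wang equation ∂_t u¹ = u¹₀·u²₀, ∂_t u² = u¹₋₁/u¹₀ − u¹₀/u¹₁; i.e., the identities D̃_t(Φ¹) = Φ¹·Φ² and D̃_t(Φ²) = S⁻¹(Φ¹)/Φ¹ − Φ¹/S(Φ¹) hold in F. -/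
import Mathlib


open MvPolynomial

/-- Variables: `(j, ℓ)` is `ũ^j_ℓ`. -/
abbrev VarD := Fin 2 × ℤ

/-- Polynomial ring over `K` in `ũ¹_ℓ`, `ũ²_ℓ`. -/
abbrev PolyD (K : Type) [Field K] := MvPolynomial VarD K

/-- Field of rational functions over `K` in `ũ¹_ℓ`, `ũ²_ℓ`. -/
abbrev FD (K : Type) [Field K] := FractionRing (PolyD K)

/-- The variable `ũ¹_ℓ`. -/
noncomputable def V1 (K : Type) [Field K] (ℓ : ℤ) : FD K :=
  algebraMap (PolyD K) (FD K) (X (0, ℓ))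

/-- The variable `ũ²_ℓ`. -/
noncomputable def V2 (K : Type) [Field K] (ℓ : ℤ) : FD K :=
  algebraMap (PolyD K) (FD K) (X (1, ℓ))

/-- `𝔽̃¹ = ũ¹₀·ũ²₀/ũ²₁` of equation (ceqnew). -/
noncomputable def Feqt1 (K : Type) [Field K] : FD K := V1 K 0 * V2 K 0 / V2 K 1

/-- `𝔽̃² = ũ²₀·(c·ũ¹₋₁ − ũ¹₀)/ũ¹₋₁` of equation (ceqnew). -/
noncomputable def Feqt2 (K : Type) [Field K] (c : K) : FD K :=
  V2 K 0 * (algebraMap K (FD K) c * V1 K (-1) - V1 K 0) / V1 K (-1)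

/-- The first component `Φ¹ = −ũ²₁/ũ¹₀` of the Miura-type transformation. -/
noncomputable def Phi1 (K : Type) [Field K] : FD K := -V2 K 1 / V1 K 0

/-- The second component `Φ² = (cũ¹₀ũ²₁ − ũ¹₀ũ²₀ − ũ¹₁ũ²₁)/(ũ¹₀ũ²₁)`. -/
noncomputable def Phi2 (K : Type) [Field K] (c : K) : FD K :=
  (algebraMap K (FD K) c * V1 K 0 * V2 K 1 - V1 K 0 * V2 K 0 - V1 K 1 * V2 K 1) /
    (V1 K 0 * V2 K 1)

private lemma aux1 {F : Type*} [Field F] (b d q0 q1 C : F) (hb : b ≠ 0) (hq1 : q1 ≠ 0) :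
    (-(q1 * (C * b - d) / b) * b - -q1 * (b * q0 / q1)) / (b * b) =
    -q1 / b * ((C * b * q1 - b * q0 - d * q1) / (b * q1)) := by
  field_simp
  ring

private lemma aux2G {F : Type*} [Field F] (a b d q0 q1 q2 C : F)
    (ha : a ≠ 0) (hb : b ≠ 0) (hq1 : q1 ≠ 0) (hq2 : q2 ≠ 0) :
    ((C * b * (q1 * (C * b - d) / b) + (C * (b * q0 / q1) + 0 * b) * q1 -
          (b * (q0 * (C * a - b) / a) + b * q0 / q1 * q0) -
          (d * (q1 * (C * b - d) / b) + d * q1 / q2 * q1)) * (b * q1) -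
        (C * b * q1 - b * q0 - d * q1) *
          (b * (q1 * (C * b - d) / b) + b * q0 / q1 * q1)) / (b * q1 * (b * q1)) =
    -q0 / a / (-q1 / b) - -q1 / b / (-q2 / d) := by
  have h1 : -q0 / a / (-q1 / b) = q0 * b / (a * q1) := by
    rw [div_div_eq_mul_div, div_mul_eq_mul_div, div_neg, neg_mul, neg_div, neg_div,
      neg_neg, div_div]
  have h2 : -q1 / b / (-q2 / d) = q1 * d / (b * q2) := by
    rw [div_div_eq_mul_div, div_mul_eq_mul_div, div_neg, neg_mul, neg_div, neg_div,
      neg_neg, div_div]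
  rw [h1, h2, div_sub_div _ _ (mul_ne_zero ha hq1) (mul_ne_zero hb hq2),
    div_eq_div_iff (by simp [hb, hq1]) (by simp [ha, hb, hq1, hq2])]
  field_simp
  ring


set_option maxHeartbeats 2000000 in
private lemma aux2 (K : Type) [Field K] (a b d q0 q1 q2 C : FD K)
    (ha : a ≠ 0) (hb : b ≠ 0) (hq1 : q1 ≠ 0) (hq2 : q2 ≠ 0) :
    ((C * b * (q1 * (C * b - d) / b) + (C * (b * q0 / q1) + 0 * b) * q1 -
          (b * (q0 * (C * a - b) / a) + b * q0 / q1 * q0) -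
          (d * (q1 * (C * b - d) / b) + d * q1 / q2 * q1)) * (b * q1) -
        (C * b * q1 - b * q0 - d * q1) *
          (b * (q1 * (C * b - d) / b) + b * q0 / q1 * q1)) / (b * q1 * (b * q1)) =
    -q0 / a / (-q1 / b) - -q1 / b / (-q2 / d) :=
  aux2G a b d q0 q1 q2 C ha hb hq1 hq2

/-- `F` is the field of rational functions over a char-0 field `K` in `ũ¹_ℓ, ũ²_ℓ`; `S` is
the field automorphism over `K` with `S(ũ^j_ℓ) = ũ^j_{ℓ+1}`, and `D̃_t` is the total
derivative of equation (ceqnew) `∂_t ũ^j = 𝔽̃^j` (the unique derivation with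
`D̃_t(ũ^j_ℓ) = S^ℓ(𝔽̃^j)`); both are quantified by these characterizing properties.
Claim: `Φ = (Φ¹, Φ²)` is a Miura-type transformation from (ceqnew) to the
Mansfield–Marí Beffa–Wang equation: `D̃_t(Φ¹) = Φ¹·Φ²` and
`D̃_t(Φ²) = S⁻¹(Φ¹)/Φ¹ − Φ¹/S(Φ¹)`. -/
theorem stmt_17 (K : Type) [Field K] [CharZero K] (c : K)
    (S : FD K ≃+* FD K)
    (hSK : ∀ x : K, S (algebraMap K (FD K) x) = algebraMap K (FD K) x)
    (hSu1 : ∀ ℓ : ℤ, S (V1 K ℓ) = V1 K (ℓ + 1))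
    (hSu2 : ∀ ℓ : ℤ, S (V2 K ℓ) = V2 K (ℓ + 1))
    (Dt : FD K → FD K)
    (hDadd : ∀ x y, Dt (x + y) = Dt x + Dt y)
    (hDmul : ∀ x y, Dt (x * y) = x * Dt y + Dt x * y)
    (hDK : ∀ x : K, Dt (algebraMap K (FD K) x) = 0)
    (hDu1 : ∀ ℓ : ℤ, Dt (V1 K ℓ) = (S ^ ℓ) (Feqt1 K))
    (hDu2 : ∀ ℓ : ℤ, Dt (V2 K ℓ) = (S ^ ℓ) (Feqt2 K c)) :
    Dt (Phi1 K) = Phi1 K * Phi2 K c ∧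
    Dt (Phi2 K c) = S.symm (Phi1 K) / Phi1 K - Phi1 K / S (Phi1 K) := by
  have hinj : Function.Injective (algebraMap (PolyD K) (FD K)) :=
    IsFractionRing.injective (PolyD K) (FD K)
  have hVne1 : ∀ ℓ : ℤ, V1 K ℓ ≠ 0 := fun ℓ =>
    (map_ne_zero_iff _ hinj).mpr (MvPolynomial.X_ne_zero _)
  have hVne2 : ∀ ℓ : ℤ, V2 K ℓ ≠ 0 := fun ℓ =>
    (map_ne_zero_iff _ hinj).mpr (MvPolynomial.X_ne_zero _)
  -- derivation facts
  have hD0 : Dt 0 = 0 := by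
    have h := hDadd 0 0
    rw [add_zero] at h
    linear_combination -h
  have hDneg : ∀ x, Dt (-x) = -Dt x := by
    intro x
    have h := hDadd x (-x)
    rw [add_neg_cancel, hD0] at h
    linear_combination -h
  have hDsub : ∀ x y, Dt (x - y) = Dt x - Dt y := by
    intro x y
    rw [sub_eq_add_neg, hDadd, hDneg, sub_eq_add_neg]
  have hDdiv : ∀ x y, y ≠ 0 → Dt (x / y) = (Dt x * y - x * Dt y) / (y * y) := by
    intro x y hy
    have hxy : x / y * y = x := div_mul_cancel₀ x hy
    have h2 : Dt x = x / y * Dt y + Dt (x / y) * y := by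
      conv_lhs => rw [← hxy]
      rw [hDmul]
    rw [eq_div_iff (mul_ne_zero hy hy)]
    linear_combination (-y) * h2 - Dt y * hxy
  -- Dt on variables
  have hS1 : ∀ x : FD K, (S ^ (1:ℤ)) x = S x := by intro x; rw [zpow_one]
  have hS0 : ∀ x : FD K, (S ^ (0:ℤ)) x = x := by intro x; rw [zpow_zero]; rfl
  have hDb : Dt (V1 K 0) = V1 K 0 * V2 K 0 / V2 K 1 := by
    rw [hDu1 0, hS0, Feqt1]
  have hDd : Dt (V1 K 1) = V1 K 1 * V2 K 1 / V2 K 2 := by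
    rw [hDu1 1, hS1, Feqt1, map_div₀, map_mul, hSu1, hSu2, hSu2]
    norm_num
  have hDq0 : Dt (V2 K 0) =
      V2 K 0 * (algebraMap K (FD K) c * V1 K (-1) - V1 K 0) / V1 K (-1) := by
    rw [hDu2 0, hS0, Feqt2]
  have hDq1 : Dt (V2 K 1) =
      V2 K 1 * (algebraMap K (FD K) c * V1 K 0 - V1 K 1) / V1 K 0 := by
    rw [hDu2 1, hS1, Feqt2, map_div₀, map_mul, map_sub, map_mul, hSK, hSu1, hSu1, hSu2]
    norm_num
  -- S and S.symm on Phi1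
  have hsymm1 : S.symm (V1 K 0) = V1 K (-1) := by
    rw [show V1 K 0 = S (V1 K (-1)) by rw [hSu1]; norm_num, RingEquiv.symm_apply_apply]
  have hsymm2 : S.symm (V2 K 1) = V2 K 0 := by
    rw [show V2 K 1 = S (V2 K 0) by rw [hSu2]; norm_num, RingEquiv.symm_apply_apply]
  have hSPhi : S (Phi1 K) = -V2 K 2 / V1 K 1 := by
    rw [Phi1, map_div₀, map_neg, hSu1, hSu2]; norm_num
  have hSsymmPhi : S.symm (Phi1 K) = -V2 K 0 / V1 K (-1) := by
    rw [Phi1, map_div₀, map_neg, hsymm1, hsymm2]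
  -- main computation
  have ha := hVne1 (-1)
  have hb := hVne1 0
  have hd := hVne1 1
  have hq0 := hVne2 0
  have hq1 := hVne2 1
  have hq2 := hVne2 2
  constructor
  · rw [Phi1, Phi2, hDdiv _ _ hb, hDneg, hDq1, hDb]
    exact aux1 (V1 K 0) (V1 K 1) (V2 K 0) (V2 K 1) (algebraMap K (FD K) c) hb hq1
  · rw [Phi2, hSsymmPhi, hSPhi, Phi1]
    rw [hDdiv _ _ (mul_ne_zero hb hq1)]
    rw [hDsub, hDsub]
    rw [hDmul, hDmul, hDmul, hDmul, hDmul]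
    rw [hDK c, hDb, hDd, hDq0, hDq1]
    exact aux2 K (V1 K (-1)) (V1 K 0) (V1 K 1) (V2 K 0) (V2 K 1) (V2 K 2)
      (algebraMap K (FD K) c) ha hb hq1 hq2
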